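/- arXiv:2302.04278 — 2 statements merged into one kernel-verified Lean document; each statement's English description precedes it below -/
import Mathlib

section
/- Let 0 ≤ q < 1 and 0 ≤ q_a < 1, let E_q be the single-qubit depolarizing channel and A_{q_a} the antinoise map, and set λ = (1−q)²/(1−q_a)². Then the two-copy composite channel satisfies ((A_{q_a}∘E_q) ⊗ (A_{q_a}∘E_q))(I₄) = I₄ and ((A_{q_a}∘E_q) ⊗ (A_{q_a}∘E_q))(S) = ((1−λ)/2)·I₄ + λ·S, where S is the swap operator on ℂ²⊗ℂ². In particular λ > 1 (excess antinoise amplifies S configurations) iff q < q_a, and λ < 1 (excess noise damps S configurations) iff q > q_a. -/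
open Kronecker

/-- The single-qubit depolarizing channel with rate `q`:
`E_q(ρ) = (1−q)·ρ + q·tr(ρ)·I/2`. -/
noncomputable def depol (q : ℝ) (ρ : Matrix (Fin 2) (Fin 2) ℂ) :
    Matrix (Fin 2) (Fin 2) ℂ :=
  (1 - (q : ℂ)) • ρ + ((q : ℂ) * ρ.trace / 2) • (1 : Matrix (Fin 2) (Fin 2) ℂ)

/-- The single-qubit antinoise map with rate `q_a`:
`A_{q_a}(ρ) = (ρ − q_a·tr(ρ)·I/2)/(1−q_a)`. -/
noncomputable def antinoise (qa : ℝ) (ρ : Matrix (Fin 2) (Fin 2) ℂ) :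
    Matrix (Fin 2) (Fin 2) ℂ :=
  (1 - (qa : ℂ))⁻¹ • (ρ - ((qa : ℂ) * ρ.trace / 2) • (1 : Matrix (Fin 2) (Fin 2) ℂ))

/-- The swap operator on `ℂ² ⊗ ℂ²`: `S(u⊗v) = v⊗u`. -/
def swapOp : Matrix (Fin 2 × Fin 2) (Fin 2 × Fin 2) ℂ :=
  Matrix.of fun p q => if p.1 = q.2 ∧ p.2 = q.1 then (1 : ℂ) else 0

/-!
Both maps are depolarizing maps `Φ_c(ρ) = c • ρ + (1 - c) • tr(ρ) • I / d`, with `c = 1 - q` for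
`E_q` and `c = 1 / (1 - q_a)` for `A_{q_a}`. Such maps preserve the trace and compose by
multiplying their parameters, so `A_{q_a} ∘ E_q = Φ_c` with `c = (1 - q) / (1 - q_a)` and
`λ = c²`. Writing `S = ∑ᵢⱼ Eᵢⱼ ⊗ Eⱼᵢ`, the map `Φ_c ⊗ Φ_c` sends `S` to `c² S` plus the
contributions of the two partial traces of `S` (each `I ⊗ I`) and of `tr S = d`, which add up to
`(1 - c²) / d • I`.
-/

open Matrix

namespace Matrix

def swapMatrix (n 𝕜 : Type*) [DecidableEq n] [Zero 𝕜] [One 𝕜] : Matrix (n × n) (n × n) 𝕜 :=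
  of fun p q => if p.1 = q.2 ∧ p.2 = q.1 then 1 else 0

variable {𝕜 n : Type*} [Field 𝕜] [Fintype n] [DecidableEq n]

def depolarizingMap (c : 𝕜) (A : Matrix n n 𝕜) : Matrix n n 𝕜 :=
  c • A + ((1 - c) * A.trace / Fintype.card n) • 1

lemma swapMatrix_eq_sum : swapMatrix n 𝕜 = ∑ i, ∑ j, single i j (1 : 𝕜) ⊗ₖ single j i 1 := by
  ext ⟨a, b⟩ ⟨a', b'⟩
  simp [swapMatrix, sum_apply, kroneckerMap_apply, single_apply, ite_and, eq_comm]

lemma trace_single_one (i j : n) : (single i j (1 : 𝕜)).trace = if i = j then 1 else 0 := by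
  split_ifs with h
  · exact h ▸ trace_single_eq_same i 1
  · exact trace_single_eq_of_ne i j 1 h

lemma sum_sum_trace_smul_single :
    ∑ i, ∑ j, (single j i (1 : 𝕜)).trace • single i j 1 = (1 : Matrix n n 𝕜) := by
  simp [trace_single_one, ite_smul, sum_single_one]

lemma sum_sum_trace_mul_trace_single :
    ∑ i : n, ∑ j, (single i j (1 : 𝕜)).trace * (single j i 1).trace = Fintype.card n := by
  simp [trace_single_one]

omit [Fintype n] [DecidableEq n] in
lemma sum_kronecker {ι m : Type*} [Fintype m] (s : Finset ι) (A : ι → Matrix n n 𝕜)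
    (B : Matrix m m 𝕜) : (∑ i ∈ s, A i) ⊗ₖ B = ∑ i ∈ s, A i ⊗ₖ B := by
  ext
  simp [sum_apply, kroneckerMap_apply, Finset.sum_mul]

omit [Fintype n] [DecidableEq n] in
lemma kronecker_sum {ι m : Type*} [Fintype m] (s : Finset ι) (A : Matrix m m 𝕜)
    (B : ι → Matrix n n 𝕜) : A ⊗ₖ (∑ i ∈ s, B i) = ∑ i ∈ s, A ⊗ₖ B i := by
  ext
  simp [sum_apply, kroneckerMap_apply, Finset.mul_sum]

section CharZero

variable [CharZero 𝕜] [Nonempty n]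

omit [DecidableEq n] in
lemma natCast_card_ne_zero : (Fintype.card n : 𝕜) ≠ 0 :=
  Nat.cast_ne_zero.mpr Fintype.card_ne_zero

lemma depolarizingMap_one (c : 𝕜) : depolarizingMap c (1 : Matrix n n 𝕜) = 1 := by
  have := natCast_card_ne_zero (𝕜 := 𝕜) (n := n)
  simp only [depolarizingMap, trace_one]
  match_scalars
  field_simp
  ring

lemma trace_depolarizingMap (c : 𝕜) (A : Matrix n n 𝕜) :
    (depolarizingMap c A).trace = A.trace := by
  have := natCast_card_ne_zero (𝕜 := 𝕜) (n := n)
  simp only [depolarizingMap, trace_add, trace_smul, trace_one, smul_eq_mul]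
  field_simp
  ring

lemma depolarizingMap_depolarizingMap (a b : 𝕜) (A : Matrix n n 𝕜) :
    depolarizingMap a (depolarizingMap b A) = depolarizingMap (a * b) A := by
  rw [depolarizingMap, trace_depolarizingMap b A]
  simp only [depolarizingMap]
  module

omit [Nonempty n] in
lemma depolarizingMap_kronecker (c : 𝕜) (A B : Matrix n n 𝕜) :
    depolarizingMap c A ⊗ₖ depolarizingMap c B =
      c ^ 2 • (A ⊗ₖ B) +
        (c * ((1 - c) / Fintype.card n)) • ((B.trace • A) ⊗ₖ 1 + 1 ⊗ₖ (A.trace • B)) +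
        (((1 - c) / Fintype.card n) ^ 2 * (A.trace * B.trace)) • 1 := by
  simp only [depolarizingMap, add_kronecker, kronecker_add, smul_kronecker, kronecker_smul,
    one_kronecker_one]
  module

lemma sum_sum_depolarizingMap_kronecker_single (c : 𝕜) :
    ∑ i, ∑ j, depolarizingMap c (single i j (1 : 𝕜)) ⊗ₖ depolarizingMap c (single j i 1) =
      ((1 - c ^ 2) / Fintype.card n) • (1 : Matrix (n × n) (n × n) 𝕜) +
        c ^ 2 • swapMatrix n 𝕜 := by
  have := natCast_card_ne_zero (𝕜 := 𝕜) (n := n)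
  simp only [depolarizingMap_kronecker, Finset.sum_add_distrib, ← Finset.smul_sum,
    ← Finset.sum_smul, ← Finset.mul_sum, ← sum_kronecker, ← kronecker_sum, ← swapMatrix_eq_sum,
    sum_sum_trace_smul_single, sum_sum_trace_mul_trace_single]
  rw [Finset.sum_comm (f := fun i j => (single i j (1 : 𝕜)).trace • single j i 1),
    sum_sum_trace_smul_single, one_kronecker_one]
  match_scalars <;> field_simp; ring

variable {c : 𝕜} {T : Matrix (n × n) (n × n) 𝕜 →ₗ[𝕜] Matrix (n × n) (n × n) 𝕜}

lemma map_one_of_map_kronecker_eq_depolarizingMap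
    (hT : ∀ A B, T (A ⊗ₖ B) = depolarizingMap c A ⊗ₖ depolarizingMap c B) : T 1 = 1 := by
  rw [← one_kronecker_one, hT, depolarizingMap_one, one_kronecker_one]

lemma map_swapMatrix_of_map_kronecker_eq_depolarizingMap
    (hT : ∀ A B, T (A ⊗ₖ B) = depolarizingMap c A ⊗ₖ depolarizingMap c B) :
    T (swapMatrix n 𝕜) = ((1 - c ^ 2) / Fintype.card n) • 1 + c ^ 2 • swapMatrix n 𝕜 := by
  rw [← sum_sum_depolarizingMap_kronecker_single, swapMatrix_eq_sum]
  simp only [map_sum, hT]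

end CharZero

end Matrix

lemma depol_eq_depolarizingMap (q : ℝ) : depol q = depolarizingMap (1 - (q : ℂ)) := by
  ext1 ρ
  simp only [depol, depolarizingMap, Fintype.card_fin, Nat.cast_ofNat, sub_sub_cancel]

lemma antinoise_eq_depolarizingMap {qa : ℝ} (hqa : qa ≠ 1) :
    antinoise qa = depolarizingMap (1 - (qa : ℂ))⁻¹ := by
  have : 1 - (qa : ℂ) ≠ 0 := sub_ne_zero.mpr (mod_cast hqa.symm)
  ext1 ρ
  simp only [antinoise, depolarizingMap, Fintype.card_fin, Nat.cast_ofNat]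
  match_scalars <;> field_simp; ring

lemma antinoise_depol {q qa : ℝ} (hqa : qa ≠ 1) (A : Matrix (Fin 2) (Fin 2) ℂ) :
    antinoise qa (depol q A) = depolarizingMap (((1 - q) / (1 - qa) : ℝ) : ℂ) A := by
  rw [antinoise_eq_depolarizingMap hqa, depol_eq_depolarizingMap,
    depolarizingMap_depolarizingMap]
  congr 1
  push_cast
  ring

theorem composite_two_copy_action_general (q qa lam : ℝ)
    (hq1 : q < 1) (hqa1 : qa < 1)
    (hlam : lam = (1 - q) ^ 2 / (1 - qa) ^ 2)
    (T : Matrix (Fin 2 × Fin 2) (Fin 2 × Fin 2) ℂ →ₗ[ℂ]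
      Matrix (Fin 2 × Fin 2) (Fin 2 × Fin 2) ℂ)
    (hT : ∀ A B : Matrix (Fin 2) (Fin 2) ℂ,
      T (A ⊗ₖ B) = antinoise qa (depol q A) ⊗ₖ antinoise qa (depol q B)) :
    T 1 = 1 ∧
      T swapOp = (((1 - (lam : ℂ)) / 2) •
          (1 : Matrix (Fin 2 × Fin 2) (Fin 2 × Fin 2) ℂ) +
        (lam : ℂ) • swapOp) ∧
      (1 < lam ↔ q < qa) ∧ (lam < 1 ↔ qa < q) := by
  set c : ℝ := (1 - q) / (1 - qa)
  have hlam_c : lam = c ^ 2 := by rw [hlam, div_pow]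
  have hc : 0 ≤ c := div_nonneg (by linarith) (by linarith)
  simp only [antinoise_depol hqa1.ne] at hT
  refine ⟨map_one_of_map_kronecker_eq_depolarizingMap hT, ?_, ?_, ?_⟩
  · rw [hlam_c, show swapOp = swapMatrix (Fin 2) ℂ from rfl]
    push_cast
    simpa only [Fintype.card_fin, Nat.cast_ofNat] using
      map_swapMatrix_of_map_kronecker_eq_depolarizingMap hT
  · rw [hlam_c, one_lt_sq_iff₀ hc, one_lt_div (by linarith), sub_lt_sub_iff_left]
  · rw [hlam_c, sq_lt_one_iff₀ hc, div_lt_one (by linarith), sub_lt_sub_iff_left]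

/-- With `λ = (1−q)²/(1−q_a)²`, the two-copy composite channel
`(A_{q_a}∘E_q) ⊗ (A_{q_a}∘E_q)` fixes the identity and sends the swap operator `S` to
`((1−λ)/2)·I₄ + λ·S`; moreover `λ > 1` iff `q < q_a` (excess antinoise amplifies `S`)
and `λ < 1` iff `q > q_a` (excess noise damps `S`). -/
theorem composite_two_copy_action (q qa lam : ℝ)
    (hq0 : 0 ≤ q) (hq1 : q < 1) (hqa0 : 0 ≤ qa) (hqa1 : qa < 1)
    (hlam : lam = (1 - q) ^ 2 / (1 - qa) ^ 2)
    (T : Matrix (Fin 2 × Fin 2) (Fin 2 × Fin 2) ℂ →ₗ[ℂ]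
      Matrix (Fin 2 × Fin 2) (Fin 2 × Fin 2) ℂ)
    (hT : ∀ A B : Matrix (Fin 2) (Fin 2) ℂ,
      T (A ⊗ₖ B) = antinoise qa (depol q A) ⊗ₖ antinoise qa (depol q B)) :
    T 1 = 1 ∧
      T swapOp = (((1 - (lam : ℂ)) / 2) •
          (1 : Matrix (Fin 2 × Fin 2) (Fin 2 × Fin 2) ℂ) +
        (lam : ℂ) • swapOp) ∧
      (1 < lam ↔ q < qa) ∧ (lam < 1 ↔ qa < q) :=
  composite_two_copy_action_general q qa lam hq1 hqa1 hlam T hT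
end

section
/- Let J > 0 and Δ > 0, and define the mean-field vector field F: ℝ² → ℝ² by F(x, y) = (−4J(3+4x)·x + 4Δ·y, −4J(3+4x)·y + 4Δ·x). Then F(x, y) = (0, 0) if and only if (x, y) is one of the three points (0, 0), ((Δ−3J)/(4J), (Δ−3J)/(4J)), and (−(3J+Δ)/(4J), (3J+Δ)/(4J)). That is, the mean-field steady states are exactly G₊ ∈ {0, −(3−Δ/J)/4, −(3+Δ/J)/4}. -/
/-- The mean-field vector field
`F(x,y) = (−4J(3+4x)x + 4Δy, −4J(3+4x)y + 4Δx)` (with `J > 0`, `Δ > 0`) vanishes exactly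
at the three steady states `(0,0)`, `((Δ−3J)/(4J), (Δ−3J)/(4J))`, and
`(−(3J+Δ)/(4J), (3J+Δ)/(4J))`; i.e. the mean-field steady states are exactly
`G₊ ∈ {0, −(3−Δ/J)/4, −(3+Δ/J)/4}`. -/
theorem mean_field_fixed_points (J Δ : ℝ) (hJ : 0 < J) (hΔ : 0 < Δ)
    (F : ℝ × ℝ → ℝ × ℝ)
    (hF : ∀ x y : ℝ, F (x, y) =
      (-4 * J * (3 + 4 * x) * x + 4 * Δ * y,
       -4 * J * (3 + 4 * x) * y + 4 * Δ * x)) :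
    ∀ x y : ℝ, F (x, y) = (0, 0) ↔
      ((x, y) = ((0 : ℝ), (0 : ℝ)) ∨
        (x, y) = ((Δ - 3 * J) / (4 * J), (Δ - 3 * J) / (4 * J)) ∨
        (x, y) = (-(3 * J + Δ) / (4 * J), (3 * J + Δ) / (4 * J))) := by
  have hJ' : (4 : ℝ) * J ≠ 0 := by positivity
  intro x y
  rw [hF, Prod.mk.injEq, Prod.mk.injEq, Prod.mk.injEq, Prod.mk.injEq]
  constructor
  · rintro ⟨h1, h2⟩
    have hd : (x - y) * (J * (3 + 4 * x) + Δ) = 0 := by linear_combination (h2 - h1) / 4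
    have hs : (x + y) * (Δ - J * (3 + 4 * x)) = 0 := by linear_combination (h1 + h2) / 4
    rcases mul_eq_zero.1 hd with he | hf
    · have hxy : x = y := by linarith
      rcases mul_eq_zero.1 hs with hz | hg
      · left
        constructor <;> linarith
      · right; left
        have hx : x = (Δ - 3 * J) / (4 * J) := by
          field_simp
          linarith
        exact ⟨hx, hxy ▸ hx⟩
    · right; right
      have hx : x = -(3 * J + Δ) / (4 * J) := by
        field_simp
        linarith
      have h2d : (x + y) * (2 * Δ) = 0 := by linear_combination hs + (x + y) * hf
      have hy : y = -x := by
        rcases mul_eq_zero.1 h2d with h | h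
        · linarith
        · linarith
      refine ⟨hx, ?_⟩
      rw [hy, hx]
      ring
  · rintro (⟨hx, hy⟩ | ⟨hx, hy⟩ | ⟨hx, hy⟩) <;> subst hx <;> subst hy <;>
      constructor <;> field_simp <;> ring
end
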